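/- Fix n ≥ 1. Let p₀ = 1 + ∑_{k≥1} H^0_k z^{−k}; for 1 ≤ j ≤ n−1 let p_{2j} = z^{2j} + ∑_{k=0}^{j−1} H^{2j}_{−2k−1} z^{2k+1} + ∑_{k≥1} H^{2j}_k z^{−k}; and for j ≥ 2n let p_j = z^j + ∑_{k=0}^{n−1} H^j_{−2k−1} z^{2k+1} + ∑_{k≥1} H^j_k z^{−k}, with all H's complex. If the family {p₀, p₂, p₄, …, p_{2n−2}} ∪ {p_j : j ≥ 2n} is multiplicatively closed and z² p lies in its ℂ-linear span for every member p, then every even member is a pure power: p_{2m} = z^{2m} for all admissible m ≥ 0, and every odd member contains only odd powers of z: p_{2m+1} = z^{2m+1} + ∑_{k=0}^{n−1} H^{2m+1}_{−2k−1} z^{2k+1} + ∑_{k≥0} H^{2m+1}_{2k+1} z^{−(2k+1)} for all m ≥ n. -/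

import Mathlib

/-!
An element of the span of the family is determined by its coefficients at `z^i` for `i` in the
index set `{0, 2, …, 2n-2} ∪ {2n, 2n+1, …}`, because there `p_j` has coefficient `δ_ij`. Hence
`p₀² = p₀` forces `p₀ = 1`, and `z² p_{2m-2} = z^{2m}` lying in the span forces `p_{2m} = z^{2m}`.
For `r = p_{2n+1}` the square `r²` has no odd coordinates, so it is a combination of the
`z^{2k}` and is fixed by `σ : z ↦ -z`; then `(r - σ r)(r + σ r) = 0`, and `r ≠ σ r` gives
`σ r = -r`. Finally `z² p_{2m+1} - p_{2m+3}` is a multiple of `p_{2n+1}`, so `σ p_j = -p_j`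
propagates to all odd `j ≥ 2n+1`.
-/

open Finset

noncomputable section

/-- `z^j` viewed as a formal Laurent series in `t = z⁻¹` (so `z^j = t^(-j)`). -/
def zp (j : ℤ) : LaurentSeries ℂ := HahnSeries.single (-j) 1

/-- The canonical-basis element
`z^j + ∑_{k=0}^{m-1} H^j_{-2k-1} z^(2k+1) + ∑_{k ≥ 1} H^j_k z^(-k)`
of a stratum of `Gr^(2)`. -/
def sigEl (H : ℕ → ℤ → ℂ) (j m : ℕ) : LaurentSeries ℂ :=
  zp j + ∑ k ∈ range m, H j (-(2*(k:ℤ)+1)) • zp (2*(k:ℤ)+1)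
    + HahnSeries.ofPowerSeries ℤ ℂ (PowerSeries.mk fun k => if 1 ≤ k then H j (k:ℤ) else 0)

/-- The `Σ_{2n}` family: `p₀` together with `p_{2j} (1 ≤ j ≤ n-1)` (each with `j` positive
odd-power terms) and `p_j (j ≥ 2n)` (each with `n` positive odd-power terms). -/
def sigma2nSet (H : ℕ → ℤ → ℂ) (n : ℕ) : Set (LaurentSeries ℂ) :=
  ((fun j => sigEl H (2*j) j) '' {j | j < n}) ∪ ((fun j => sigEl H j n) '' {j | 2*n ≤ j})

section Biorthogonal

variable {R M ι : Type*} [DecidableEq ι] {v : ι → M} {s : Set ι}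

theorem mem_span_image_inter_of_coord_eq_zero [Semiring R] [AddCommMonoid M] [Module R M]
    {f : ι → M →ₗ[R] R} {t : Set ι}
    (hvf : ∀ i ∈ s, ∀ j ∈ s, f i (v j) = if i = j then 1 else 0) {x : M}
    (hx : x ∈ Submodule.span R (v '' s)) (h0 : ∀ i ∈ s, i ∉ t → f i x = 0) :
    x ∈ Submodule.span R (v '' (s ∩ t)) := by
  obtain ⟨l, hls, rfl⟩ := (Finsupp.mem_span_image_iff_linearCombination R).mp hx
  have hcoord : ∀ i ∈ s, f i (Finsupp.linearCombination R v l) = l i := by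
    intro i hi
    rw [Finsupp.linearCombination_apply, map_finsuppSum]
    calc (l.sum fun j a => f i (a • v j)) = l.sum fun j a => if i = j then a else 0 := by
          refine Finset.sum_congr rfl fun j hj => ?_
          dsimp only
          rw [map_smul, hvf i hi j (hls hj), smul_eq_mul, mul_ite, mul_one, mul_zero]
      _ = l i := by simp
  refine (Finsupp.mem_span_image_iff_linearCombination R).mpr ⟨l, fun i hi => ?_, rfl⟩
  have his : i ∈ s := hls hi
  refine ⟨his, ?_⟩
  by_contra hit
  exact Finsupp.mem_support_iff.mp hi (by rw [← hcoord i his, h0 i his hit])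

theorem eq_of_mem_span_image_of_coord_eq [Ring R] [AddCommGroup M] [Module R M]
    {f : ι → M →ₗ[R] R} (hvf : ∀ i ∈ s, ∀ j ∈ s, f i (v j) = if i = j then 1 else 0)
    {x y : M} (hx : x ∈ Submodule.span R (v '' s)) (hy : y ∈ Submodule.span R (v '' s))
    (hxy : ∀ i ∈ s, f i x = f i y) : x = y := by
  have h := mem_span_image_inter_of_coord_eq_zero (t := ∅) hvf (sub_mem hx hy)
    fun i hi _ => by rw [map_sub, hxy i hi, sub_self]
  simpa [sub_eq_zero] using h

end Biorthogonal

theorem HahnSeries.coeff_mul_eq_zero {Γ R : Type*} [AddCommMonoid Γ] [PartialOrder Γ]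
    [IsOrderedCancelAddMonoid Γ] [NonUnitalNonAssocSemiring R] {x y : HahnSeries Γ R} {e : Γ}
    (h : ∀ a b, a + b = e → x.coeff a = 0 ∨ y.coeff b = 0) : (x * y).coeff e = 0 := by
  rw [HahnSeries.coeff_mul]
  refine Finset.sum_eq_zero fun ab hab => ?_
  rcases h ab.1 ab.2 (Finset.mem_antidiagonal.mp hab).2.2 with h' | h' <;> simp [h']

namespace LaurentSeries

variable {R : Type*} [CommRing R]

-- `x(t) ↦ x(-t)`, i.e. `z ↦ -z`.
def negVar : LaurentSeries R →ₗ[R] LaurentSeries R where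
  toFun x :=
    { coeff := fun e => (e.negOnePow : ℤ) * x.coeff e
      isPWO_support' := x.isPWO_support.mono fun _ he => right_ne_zero_of_mul he }
  map_add' x y := by ext; simp [mul_add]
  map_smul' r x := by ext; simp [mul_left_comm]

theorem coeff_negVar (x : LaurentSeries R) (e : ℤ) :
    (negVar x).coeff e = (e.negOnePow : ℤ) * x.coeff e := rfl

theorem support_negVar (x : LaurentSeries R) : (negVar x).support = x.support := by
  ext e
  have hu : IsUnit ((e.negOnePow : ℤ) : R) := e.negOnePow.isUnit.map (Int.castRingHom R)
  exact hu.mul_right_eq_zero.not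

theorem negVar_mul (x y : LaurentSeries R) : negVar (x * y) = negVar x * negVar y := by
  ext e
  have hA : Finset.antidiagonal (negVar x).isPWO_support (negVar y).isPWO_support e =
      Finset.antidiagonal x.isPWO_support y.isPWO_support e := by
    ext; simp only [Finset.mem_antidiagonal, support_negVar]
  rw [coeff_negVar, HahnSeries.coeff_mul, HahnSeries.coeff_mul, hA, Finset.mul_sum]
  refine Finset.sum_congr rfl fun ij hij => ?_
  rw [coeff_negVar, coeff_negVar, ← (Finset.mem_antidiagonal.mp hij).2.2, Int.negOnePow_add]
  push_cast
  ring

theorem negVar_single (a : ℤ) (r : R) :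
    negVar (HahnSeries.single a r) = HahnSeries.single a ((a.negOnePow : ℤ) * r) := by
  ext e
  rw [coeff_negVar, HahnSeries.coeff_single, HahnSeries.coeff_single]
  split_ifs with h <;> simp [h]

variable [NoZeroDivisors R] [CharZero R]

theorem coeff_eq_zero_of_negVar_eq_neg {x : LaurentSeries R} (hx : negVar x = -x) {e : ℤ}
    (he : Even e) : x.coeff e = 0 := by
  have h := congrArg (HahnSeries.coeff · e) hx
  simp only [coeff_negVar, Int.negOnePow_even e he, HahnSeries.coeff_neg, Units.val_one,
    Int.cast_one, one_mul] at h
  exact self_eq_neg.mp h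

theorem negVar_eq_neg_of_negVar_mul_self {r : LaurentSeries R} (hr : negVar (r * r) = r * r)
    {e : ℤ} (he : Odd e) (hre : r.coeff e ≠ 0) : negVar r = -r := by
  have hfac : (r - negVar r) * (r + negVar r) = 0 := by
    rw [← sub_eq_zero.mpr hr.symm, negVar_mul]
    ring
  rcases mul_eq_zero.mp hfac with h | h
  · have h' := congrArg (HahnSeries.coeff · e) (sub_eq_zero.mp h)
    simp only [coeff_negVar, Int.negOnePow_odd e he, Units.val_neg, Units.val_one, Int.cast_neg,
      Int.cast_one, neg_one_mul] at h'
    exact absurd (self_eq_neg.mp h') hre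
  · exact eq_neg_of_add_eq_zero_right h

end LaurentSeries

theorem coeff_zp (j e : ℤ) : (zp j).coeff e = if e = -j then 1 else 0 := by
  rw [zp, HahnSeries.coeff_single]
  congr

theorem zp_mul_zp (a b : ℤ) : zp a * zp b = zp (a + b) := by
  rw [zp, zp, zp, HahnSeries.single_mul_single, neg_add, one_mul]

theorem coeff_zp_two_mul (x : LaurentSeries ℂ) (e : ℤ) :
    (zp 2 * x).coeff e = x.coeff (e + 2) := by
  simpa [zp] using HahnSeries.coeff_single_mul_add (r := (1 : ℂ)) (x := x) (a := e + 2) (b := -2)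

theorem negVar_zp_of_even {j : ℤ} (hj : Even j) : LaurentSeries.negVar (zp j) = zp j := by
  rw [zp, LaurentSeries.negVar_single, Int.negOnePow_even _ hj.neg]
  simp

theorem coeff_sigEl (H : ℕ → ℤ → ℂ) (j m : ℕ) (e : ℤ) :
    (sigEl H j m).coeff e
      = (if e = -(j:ℤ) then 1 else 0)
        + (∑ k ∈ range m, if e = -(2*(k:ℤ)+1) then H j (-(2*(k:ℤ)+1)) else 0)
        + (if 1 ≤ e then H j e else 0) := by
  simp only [sigEl, HahnSeries.coeff_add, HahnSeries.coeff_sum, HahnSeries.coeff_smul, coeff_zp,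
    PowerSeries.coeff_coe, PowerSeries.coeff_mk, smul_eq_mul, mul_ite, mul_one, mul_zero]
  congr 1
  split_ifs <;> first | rfl | (exfalso; omega) | (congr 1; omega)

theorem coeff_sigEl_of_pos (H : ℕ → ℤ → ℂ) (j m : ℕ) {e : ℤ} (he : 1 ≤ e) :
    (sigEl H j m).coeff e = H j e := by
  rw [coeff_sigEl, if_neg (by omega), if_pos he, sum_eq_zero fun k _ => if_neg (by omega)]
  ring

theorem coeff_sigEl_of_lt (H : ℕ → ℤ → ℂ) {j m : ℕ} (hj : 2 * m ≤ j) {e : ℤ} (he : e < -j) :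
    (sigEl H j m).coeff e = 0 := by
  rw [coeff_sigEl, if_neg (by omega), if_neg (by omega),
    sum_eq_zero fun k hk => if_neg (by rw [mem_range] at hk; omega)]
  ring

theorem coeff_sigEl_of_even_of_nonpos (H : ℕ → ℤ → ℂ) {j : ℕ} (hj : Odd j) (m : ℕ) {e : ℤ}
    (he : Even e) (he0 : e ≤ 0) : (sigEl H j m).coeff e = 0 := by
  obtain ⟨u, rfl⟩ := hj
  obtain ⟨v, rfl⟩ := he
  rw [coeff_sigEl, if_neg (by omega), if_neg (by omega), sum_eq_zero fun k _ => if_neg (by omega)]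
  ring

theorem sigEl_eq_of_coeff_even_eq_zero {H : ℕ → ℤ → ℂ} {j m : ℕ}
    (h : ∀ e : ℤ, Even e → (sigEl H j m).coeff e = 0) :
    sigEl H j m = zp j + ∑ k ∈ range m, H j (-(2*(k:ℤ)+1)) • zp (2*(k:ℤ)+1)
      + HahnSeries.ofPowerSeries ℤ ℂ (PowerSeries.mk fun k => if Odd k then H j (k:ℤ) else 0) := by
  rw [sigEl]
  congr 3
  funext k
  rcases Nat.even_or_odd k with hk | hk
  · rw [if_neg (Nat.not_odd_iff_even.mpr hk)]
    split_ifs with hk1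
    · rw [← coeff_sigEl_of_pos H j m (by omega : (1 : ℤ) ≤ k)]
      exact h k (by exact_mod_cast hk)
    · rfl
  · rw [if_pos hk, if_pos (show 1 ≤ k from hk.pos)]

def sigma2nIndex (n : ℕ) : Set ℕ := {j | Even j ∨ 2 * n ≤ j}

theorem coeff_sigEl_neg_of_mem (H : ℕ → ℤ → ℂ) {n m : ℕ} (hm : m ≤ n) (j : ℕ) {i : ℕ}
    (hi : i ∈ sigma2nIndex n) : (sigEl H j m).coeff (-i) = if i = j then 1 else 0 := by
  have hodd : ∀ k ∈ range m, ¬(-(i : ℤ) = -(2 * k + 1)) := by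
    intro k hk
    rw [mem_range] at hk
    rcases hi with ⟨r, hr⟩ | hi <;> omega
  rw [coeff_sigEl, if_neg (show ¬(1 : ℤ) ≤ -i by omega),
    sum_eq_zero fun k hk => if_neg (hodd k hk), add_zero, add_zero]
  simp only [neg_inj, Nat.cast_inj]

-- `p_j`: the number `m` of positive odd powers in `sigEl H j m` is `j / 2` for even `j < 2n`
-- and `n` for `j ≥ 2n`.
def sigma2nBasis (H : ℕ → ℤ → ℂ) (n j : ℕ) : LaurentSeries ℂ := sigEl H j (min (j / 2) n)

section Sigma2n

variable {H : ℕ → ℤ → ℂ} {n : ℕ}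

open LaurentSeries

theorem sigma2nBasis_of_le {j : ℕ} (hj : 2 * n ≤ j) : sigma2nBasis H n j = sigEl H j n := by
  rw [sigma2nBasis, min_eq_right (by omega)]

theorem sigma2nBasis_two_mul_of_lt {k : ℕ} (hk : k < n) :
    sigma2nBasis H n (2 * k) = sigEl H (2 * k) k := by
  rw [sigma2nBasis, min_eq_left (by omega), Nat.mul_div_cancel_left k two_pos]

theorem sigma2nSet_eq_image : sigma2nSet H n = sigma2nBasis H n '' sigma2nIndex n := by
  ext x
  constructor
  · rintro (⟨k, hk, rfl⟩ | ⟨j, hj, rfl⟩)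
    · exact ⟨2 * k, Or.inl (even_two_mul k), sigma2nBasis_two_mul_of_lt hk⟩
    · exact ⟨j, Or.inr hj, sigma2nBasis_of_le hj⟩
  · rintro ⟨j, hj, rfl⟩
    by_cases hjn : 2 * n ≤ j
    · exact Or.inr ⟨j, hjn, (sigma2nBasis_of_le hjn).symm⟩
    · obtain ⟨k, rfl⟩ := hj.resolve_right hjn |>.two_dvd
      have hk : k < n := by omega
      exact Or.inl ⟨k, hk, (sigma2nBasis_two_mul_of_lt hk).symm⟩

theorem sigma2nBasis_mem {j : ℕ} (hj : j ∈ sigma2nIndex n) :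
    sigma2nBasis H n j ∈ sigma2nSet H n :=
  sigma2nSet_eq_image ▸ Set.mem_image_of_mem _ hj

theorem coeff_sigma2nBasis_neg_of_mem {i : ℕ} (hi : i ∈ sigma2nIndex n) (j : ℕ) :
    (sigma2nBasis H n j).coeff (-i) = if i = j then 1 else 0 :=
  coeff_sigEl_neg_of_mem H (min_le_right _ _) j hi

theorem eq_of_mem_span_sigma2nSet {x y : LaurentSeries ℂ}
    (hx : x ∈ Submodule.span ℂ (sigma2nSet H n)) (hy : y ∈ Submodule.span ℂ (sigma2nSet H n))
    (hxy : ∀ i ∈ sigma2nIndex n, x.coeff (-i) = y.coeff (-i)) : x = y := by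
  rw [sigma2nSet_eq_image] at hx hy
  exact eq_of_mem_span_image_of_coord_eq
    (f := fun i : ℕ => HahnSeries.coeff.linearMap (R := ℂ) (-(i : ℤ)))
    (fun i hi j _ => coeff_sigma2nBasis_neg_of_mem hi j) hx hy hxy

theorem negVar_eq_of_mem_span_sigma2nSet {t : Set ℕ}
    {g : LaurentSeries ℂ →ₗ[ℂ] LaurentSeries ℂ} {x : LaurentSeries ℂ}
    (hx : x ∈ Submodule.span ℂ (sigma2nSet H n))
    (hxt : ∀ i ∈ sigma2nIndex n, i ∉ t → x.coeff (-i) = 0)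
    (hg : ∀ i ∈ sigma2nIndex n ∩ t, negVar (sigma2nBasis H n i) = g (sigma2nBasis H n i)) :
    negVar x = g x := by
  rw [sigma2nSet_eq_image] at hx
  have hxt' := mem_span_image_inter_of_coord_eq_zero
    (f := fun i : ℕ => HahnSeries.coeff.linearMap (R := ℂ) (-(i : ℤ)))
    (fun i hi j _ => coeff_sigma2nBasis_neg_of_mem hi j) hx hxt
  refine LinearMap.mem_eqLocus.mp (Submodule.span_le.mpr ?_ hxt')
  rintro _ ⟨i, hi, rfl⟩
  exact hg i hi

theorem sigEl_zero_zero_eq_one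
    (hmul : ∀ x ∈ sigma2nSet H n, ∀ y ∈ sigma2nSet H n,
      x * y ∈ Submodule.span ℂ (sigma2nSet H n)) :
    sigEl H 0 0 = 1 := by
  have hidx : 0 ∈ sigma2nIndex n := Or.inl .zero
  have hmem : sigEl H 0 0 ∈ sigma2nSet H n := by
    simpa [sigma2nBasis] using sigma2nBasis_mem (H := H) hidx
  set g : PowerSeries ℂ := 1 + PowerSeries.mk fun k => if 1 ≤ k then H 0 k else 0
  have hg : sigEl H 0 0 = (g : LaurentSeries ℂ) := by simp [sigEl, zp, g]
  have hsq : sigEl H 0 0 * sigEl H 0 0 = sigEl H 0 0 := by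
    refine eq_of_mem_span_sigma2nSet (hmul _ hmem _ hmem) (Submodule.subset_span hmem)
      fun i hi => ?_
    rw [coeff_sigEl_neg_of_mem H (Nat.zero_le n) 0 hi, hg, ← PowerSeries.coe_mul,
      PowerSeries.coeff_coe]
    rcases i with _ | i
    · simp [g]
    · rw [if_pos (by omega), if_neg (by omega)]
  have hne : sigEl H 0 0 ≠ 0 := fun h => by
    simpa [h] using coeff_sigEl_neg_of_mem H (Nat.zero_le n) 0 hidx
  exact (mul_eq_right₀ hne).mp hsq

theorem sigma2nBasis_two_mul
    (hmul : ∀ x ∈ sigma2nSet H n, ∀ y ∈ sigma2nSet H n,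
      x * y ∈ Submodule.span ℂ (sigma2nSet H n))
    (hz2 : ∀ x ∈ sigma2nSet H n, zp 2 * x ∈ Submodule.span ℂ (sigma2nSet H n)) (k : ℕ) :
    sigma2nBasis H n (2 * k) = zp (2 * k) := by
  induction k with
  | zero => simpa [sigma2nBasis, zp] using sigEl_zero_zero_eq_one hmul
  | succ k ih =>
    have hzp : zp (2 * ((k + 1 : ℕ) : ℤ)) ∈ Submodule.span ℂ (sigma2nSet H n) := by
      have h := hz2 _ (sigma2nBasis_mem (Or.inl (even_two_mul k)))
      rwa [ih, zp_mul_zp, show (2 : ℤ) + 2 * k = 2 * (k + 1 : ℕ) by push_cast; ring] at h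
    refine eq_of_mem_span_sigma2nSet
      (Submodule.subset_span (sigma2nBasis_mem (Or.inl (even_two_mul _)))) hzp fun i hi => ?_
    rw [coeff_sigma2nBasis_neg_of_mem hi, coeff_zp]
    split_ifs <;> first | rfl | (exfalso; omega)

theorem negVar_sigma2nBasis_lowest_odd
    (hmul : ∀ x ∈ sigma2nSet H n, ∀ y ∈ sigma2nSet H n,
      x * y ∈ Submodule.span ℂ (sigma2nSet H n))
    (hz2 : ∀ x ∈ sigma2nSet H n, zp 2 * x ∈ Submodule.span ℂ (sigma2nSet H n)) :
    negVar (sigma2nBasis H n (2 * n + 1)) = -sigma2nBasis H n (2 * n + 1) := by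
  set r := sigma2nBasis H n (2 * n + 1) with hr_def
  have hidx : 2 * n + 1 ∈ sigma2nIndex n := Or.inr (by omega)
  have hrmem : r ∈ sigma2nSet H n := sigma2nBasis_mem hidx
  have hr : r = sigEl H (2 * n + 1) n := sigma2nBasis_of_le (by omega)
  -- For `a + b = -i` with `i` odd, one of `a, b` is even, and both are `≤ 0` unless one of
  -- them lies below the lowest exponent `-(2n+1)` of `r`.
  have hsq_odd : ∀ i ∈ sigma2nIndex n, i ∉ {i | Even i} → (r * r).coeff (-i) = 0 := by
    intro i hi hie
    have h2n : 2 * n ≤ i := hi.resolve_left hie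
    obtain ⟨u, rfl⟩ := Nat.not_even_iff_odd.mp hie
    refine HahnSeries.coeff_mul_eq_zero fun a b hab => ?_
    rw [hr]
    by_cases ha : a < -((2 * n + 1 : ℕ) : ℤ)
    · exact .inl (coeff_sigEl_of_lt H (by omega) ha)
    by_cases hb : b < -((2 * n + 1 : ℕ) : ℤ)
    · exact .inr (coeff_sigEl_of_lt H (by omega) hb)
    have hodd : Odd (2 * n + 1) := odd_two_mul_add_one n
    rcases Int.even_or_odd a with hae | ⟨v, rfl⟩
    · exact .inl (coeff_sigEl_of_even_of_nonpos H hodd n hae (by omega))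
    · exact .inr (coeff_sigEl_of_even_of_nonpos H hodd n
        ⟨-u - v - 1, by push_cast at hab; omega⟩ (by omega))
  have hfix : negVar (r * r) = r * r := by
    refine negVar_eq_of_mem_span_sigma2nSet (g := LinearMap.id) (hmul _ hrmem _ hrmem) hsq_odd ?_
    rintro i ⟨-, hi⟩
    obtain ⟨k, rfl⟩ := hi.two_dvd
    rw [sigma2nBasis_two_mul hmul hz2, negVar_zp_of_even (even_two_mul _)]
    rfl
  refine negVar_eq_neg_of_negVar_mul_self hfix (e := -(2 * n + 1 : ℕ))
    ⟨-n - 1, by push_cast; ring⟩ ?_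
  rw [hr_def, coeff_sigma2nBasis_neg_of_mem hidx]
  simp

theorem negVar_sigma2nBasis_odd
    (hmul : ∀ x ∈ sigma2nSet H n, ∀ y ∈ sigma2nSet H n,
      x * y ∈ Submodule.span ℂ (sigma2nSet H n))
    (hz2 : ∀ x ∈ sigma2nSet H n, zp 2 * x ∈ Submodule.span ℂ (sigma2nSet H n))
    {m : ℕ} (hm : n ≤ m) :
    negVar (sigma2nBasis H n (2 * m + 1)) = -sigma2nBasis H n (2 * m + 1) := by
  induction m, hm using Nat.le_induction with
  | base => exact negVar_sigma2nBasis_lowest_odd hmul hz2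
  | succ m hm ih =>
    set q := sigma2nBasis H n (2 * m + 1)
    set p := sigma2nBasis H n (2 * (m + 1) + 1)
    have hq : q ∈ sigma2nSet H n := sigma2nBasis_mem (Or.inr (by omega))
    have hp : p ∈ sigma2nSet H n := sigma2nBasis_mem (Or.inr (by omega))
    have hx : negVar (zp 2 * q - p) = -(zp 2 * q - p) := by
      refine negVar_eq_of_mem_span_sigma2nSet (t := {2 * n + 1}) (g := -LinearMap.id)
        (sub_mem (hz2 _ hq) (Submodule.subset_span hp)) (fun i hi hin => ?_) ?_
      · rw [HahnSeries.coeff_sub, coeff_zp_two_mul, coeff_sigma2nBasis_neg_of_mem hi, sub_eq_zero]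
        rcases Nat.even_or_odd i with ⟨u, rfl⟩ | ⟨u, rfl⟩
        · rw [coeff_eq_zero_of_negVar_eq_neg ih ⟨1 - u, by omega⟩, if_neg (by omega)]
        · have h2n : 2 * n ≤ 2 * u + 1 := hi.resolve_left (by simp [parity_simps])
          rw [Set.mem_singleton_iff] at hin
          rw [show -((2 * u + 1 : ℕ) : ℤ) + 2 = -((2 * u - 1 : ℕ) : ℤ) by omega,
            coeff_sigma2nBasis_neg_of_mem (Or.inr (by omega))]
          split_ifs <;> first | rfl | (exfalso; omega)
      · rintro _ ⟨-, rfl⟩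
        exact negVar_sigma2nBasis_lowest_odd hmul hz2
    have hpx : p = zp 2 * q - (zp 2 * q - p) := (sub_sub_cancel _ _).symm
    rw [hpx, map_sub, negVar_mul, negVar_zp_of_even even_two, ih, hx]
    ring

end Sigma2n

theorem sigma2n_parity_general (n : ℕ) (H : ℕ → ℤ → ℂ)
    (hmul : ∀ x ∈ sigma2nSet H n, ∀ y ∈ sigma2nSet H n,
      x * y ∈ Submodule.span ℂ (sigma2nSet H n))
    (hz2 : ∀ x ∈ sigma2nSet H n, zp 2 * x ∈ Submodule.span ℂ (sigma2nSet H n)) :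
    (∀ m : ℕ, m < n → sigEl H (2*m) m = zp (2*m)) ∧
    (∀ m : ℕ, n ≤ m → sigEl H (2*m) n = zp (2*m)) ∧
    (∀ m : ℕ, n ≤ m →
      sigEl H (2*m+1) n
        = zp (2*m+1) + ∑ k ∈ range n, H (2*m+1) (-(2*(k:ℤ)+1)) • zp (2*(k:ℤ)+1)
          + HahnSeries.ofPowerSeries ℤ ℂ
              (PowerSeries.mk fun k => if Odd k then H (2*m+1) (k:ℤ) else 0)) := by
  refine ⟨fun m hm => ?_, fun m hm => ?_, fun m hm => ?_⟩
  · rw [← sigma2nBasis_two_mul_of_lt hm, sigma2nBasis_two_mul hmul hz2]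
  · rw [← sigma2nBasis_of_le (by omega : 2 * n ≤ 2 * m), sigma2nBasis_two_mul hmul hz2]
  · have hodd := negVar_sigma2nBasis_odd hmul hz2 hm
    rw [sigma2nBasis_of_le (by omega)] at hodd
    rw [sigEl_eq_of_coeff_even_eq_zero fun _ he =>
      LaurentSeries.coeff_eq_zero_of_negVar_eq_neg hodd he]
    push_cast
    rfl

/-- In a multiplicatively closed `Σ_{2n}` family all even elements are pure powers
`p_{2m} = z^{2m}` and all odd elements contain only odd powers of `z`. -/
theorem sigma2n_parity (n : ℕ) (hn : 1 ≤ n) (H : ℕ → ℤ → ℂ)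
    (hmul : ∀ x ∈ sigma2nSet H n, ∀ y ∈ sigma2nSet H n,
      x * y ∈ Submodule.span ℂ (sigma2nSet H n))
    (hz2 : ∀ x ∈ sigma2nSet H n, zp 2 * x ∈ Submodule.span ℂ (sigma2nSet H n)) :
    (∀ m : ℕ, m < n → sigEl H (2*m) m = zp (2*m)) ∧
    (∀ m : ℕ, n ≤ m → sigEl H (2*m) n = zp (2*m)) ∧
    (∀ m : ℕ, n ≤ m →
      sigEl H (2*m+1) n
        = zp (2*m+1) + ∑ k ∈ range n, H (2*m+1) (-(2*(k:ℤ)+1)) • zp (2*(k:ℤ)+1)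
          + HahnSeries.ofPowerSeries ℤ ℂ
              (PowerSeries.mk fun k => if Odd k then H (2*m+1) (k:ℤ) else 0)) :=
  sigma2n_parity_general n H hmul hz2

end
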